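/- arXiv:2106.12846 — 7 statements merged into one kernel-verified Lean document; each statement's English description precedes it below -/
import Mathlib

section
/- Let α be a nonempty finite alphabet. Then the algebra of (possibly empty) binary trees with leaves labeled in α, i.e. the free magma FreeMagma (Option α), is affine complete: for every n and every congruence preserving function f : (Fin n → FreeMagma (Option α)) → FreeMagma (Option α) there exists P ∈ FreeMagma (Option α ⊕ Fin n) such that for all u, f u equals the image of P under the magma homomorphism sending Sum.inl c to FreeMagma.of c and Sum.inr i to u i. -/
/-- `f` is congruence preserving on the algebra of binary trees with leaves labeled
in `Option α` (the free magma). -/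
def IsTreeCP {α : Type*} {n : ℕ}
    (f : (Fin n → FreeMagma (Option α)) → FreeMagma (Option α)) : Prop :=
  ∀ c : Con (FreeMagma (Option α)), ∀ u v : Fin n → FreeMagma (Option α),
    (∀ i, c (u i) (v i)) → c (f u) (f v)

/-!
Fix letters `a ≠ b`. At scale `m` the generic tuple has as `i`-th entry the left comb of `a`s
closed by a leaf `b`, with `m + i + 2` leaves; no entry is a subtree of another. Let `P_m` be
`f` of the generic tuple with every occurrence of its `i`-th entry abstracted into the variable `i`.
Rewriting bottom-up each entry of the generic tuple into `u i` has a congruence as kernel, so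
congruence preservation gives `f u = P_m(u)` whenever `u`, `f u` and `P_m(u)` are too small to
contain a generic entry. At the generic tuple of scale `0` this bounds the size of `P_m`
independently of `m`; at the generic tuple of a scale `M` it gives `f` of that tuple as `P_m` of it,
and abstracting again recovers `P_M = P_m` for `m` large compared with `M`.
-/

open Function

def IsCongruencePreserving {M ι : Type*} [Mul M] (f : (ι → M) → M) : Prop :=
  ∀ c : Con M, ∀ u v : ι → M, (∀ i, c (u i) (v i)) → c (f u) (f v)

namespace FreeMagma

variable {β γ ι : Type*}

lemma length_mul (x y : FreeMagma β) : (x * y).length = x.length + y.length := rfl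

lemma mul_eq_mul_iff {x y x' y' : FreeMagma β} : x * y = x' * y' ↔ x = x' ∧ y = y' :=
  ⟨fun h => by injection h with hx hy; exact ⟨hx, hy⟩,
    fun ⟨hx, hy⟩ => hx ▸ hy ▸ rfl⟩

lemma mul_ne_of (x y : FreeMagma β) (c : β) : x * y ≠ of c := by rintro ⟨⟩

@[simp] lemma length_map (f : β → γ) (t : FreeMagma β) : (map f t).length = t.length := by
  induction t with
  | ih1 c => rfl
  | ih2 x y ihx ihy => rw [map_mul, length_mul, length_mul, ihx, ihy]

inductive Subtree : FreeMagma β → FreeMagma β → Prop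
  | refl (t : FreeMagma β) : Subtree t t
  | mul_left {s x : FreeMagma β} (y : FreeMagma β) : Subtree s x → Subtree s (x * y)
  | mul_right (x : FreeMagma β) {s y : FreeMagma β} : Subtree s y → Subtree s (x * y)

lemma subtree_of_iff {s : FreeMagma β} {c : β} : Subtree s (of c) ↔ s = of c :=
  ⟨fun h => by cases h; rfl, fun h => h ▸ .refl _⟩

lemma subtree_mul_iff {s x y : FreeMagma β} :
    Subtree s (x * y) ↔ s = x * y ∨ Subtree s x ∨ Subtree s y := by
  refine ⟨fun h => ?_, ?_⟩
  · cases h with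
    | refl => exact .inl rfl
    | mul_left _ h => exact .inr (.inl h)
    | mul_right _ h => exact .inr (.inr h)
  · rintro (rfl | h | h)
    exacts [.refl _, .mul_left _ h, .mul_right _ h]

lemma Subtree.trans {s t r : FreeMagma β} (hst : Subtree s t) (htr : Subtree t r) :
    Subtree s r := by
  induction htr with
  | refl => exact hst
  | mul_left y _ ih => exact .mul_left y (ih hst)
  | mul_right x _ ih => exact .mul_right x (ih hst)

lemma Subtree.length_le {s t : FreeMagma β} (h : Subtree s t) : s.length ≤ t.length := by
  induction h with
  | refl => rfl
  | mul_left y _ ih => rw [length_mul]; omega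
  | mul_right x _ ih => rw [length_mul]; omega

/-- The polynomial function of a tree polynomial with variables in `ι`. -/
def eval (v : ι → FreeMagma β) : FreeMagma (β ⊕ ι) →ₙ* FreeMagma β :=
  lift (Sum.elim of v)

@[simp] lemma eval_of_inl (v : ι → FreeMagma β) (c : β) : eval v (of (.inl c)) = of c := rfl

@[simp] lemma eval_of_inr (v : ι → FreeMagma β) (i : ι) : eval v (of (.inr i)) = v i := rfl

@[simp] lemma eval_map_inl (v : ι → FreeMagma β) (t : FreeMagma β) :
    eval v (map Sum.inl t) = t := by
  induction t with
  | ih1 c => rfl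
  | ih2 x y ihx ihy => rw [map_mul, map_mul, ihx, ihy]

lemma length_le_length_eval (v : ι → FreeMagma β) (Q : FreeMagma (β ⊕ ι)) :
    Q.length ≤ (eval v Q).length := by
  induction Q with
  | ih1 s =>
    cases s
    exacts [le_rfl, (v _).length_pos]
  | ih2 x y ihx ihy => rw [map_mul, length_mul, length_mul]; omega

lemma length_eval_le {v : ι → FreeMagma β} {B : ℕ} (hB : ∀ j, (v j).length ≤ B)
    (Q : FreeMagma (β ⊕ ι)) : (eval v Q).length ≤ Q.length * (B + 1) := by
  induction Q with
  | ih1 s => cases s <;> simp [(hB _).trans (Nat.le_succ B)]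
  | ih2 x y ihx ihy => rw [map_mul, length_mul, length_mul, add_mul]; omega

lemma exists_eq_map_inl {Q : FreeMagma (β ⊕ ι)} (h : ∀ j, ¬ Subtree (of (.inr j)) Q) :
    ∃ R : FreeMagma β, Q = map Sum.inl R := by
  induction Q with
  | ih1 s =>
    cases s with
    | inl c => exact ⟨of c, rfl⟩
    | inr j => exact absurd (.refl _) (h j)
  | ih2 x y ihx ihy =>
    obtain ⟨R, rfl⟩ := ihx fun j hj => h j (.mul_left _ hj)
    obtain ⟨R', rfl⟩ := ihy fun j hj => h j (.mul_right _ hj)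
    exact ⟨R * R', (map_mul _ _ _).symm⟩

lemma not_subtree_mul_left (x y : FreeMagma β) : ¬ Subtree (x * y) x := fun h => by
  have := h.length_le
  have := y.length_pos
  rw [length_mul] at *
  omega

lemma not_subtree_mul_right (x y : FreeMagma β) : ¬ Subtree (x * y) y := fun h => by
  have := h.length_le
  have := x.length_pos
  rw [length_mul] at *
  omega

lemma Subtree.eval {Q' Q : FreeMagma (β ⊕ ι)} (h : Subtree Q' Q) (v : ι → FreeMagma β) :
    Subtree (eval v Q') (eval v Q) := by
  induction h with
  | refl => exact .refl _
  | mul_left y _ ih => rw [map_mul]; exact .mul_left _ ih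
  | mul_right x _ ih => rw [map_mul]; exact .mul_right _ ih

lemma subtree_eval {v : ι → FreeMagma β} {s : FreeMagma β} {Q : FreeMagma (β ⊕ ι)}
    (h : Subtree s (eval v Q)) :
    (∃ j, Subtree (of (.inr j)) Q ∧ Subtree s (v j)) ∨
      ∃ Q', Subtree Q' Q ∧ s = eval v Q' := by
  induction Q with
  | ih1 q =>
    cases q with
    | inl c => exact .inr ⟨_, .refl _, subtree_of_iff.1 h⟩
    | inr j => exact .inl ⟨j, .refl _, h⟩
  | ih2 x y ihx ihy =>
    rw [map_mul, subtree_mul_iff, ← map_mul] at h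
    rcases h with h | h | h
    · exact .inr ⟨_, .refl _, h⟩
    · rcases ihx h with ⟨j, hj, h⟩ | ⟨Q', hQ', h⟩
      exacts [.inl ⟨j, .mul_left _ hj, h⟩, .inr ⟨Q', .mul_left _ hQ', h⟩]
    · rcases ihy h with ⟨j, hj, h⟩ | ⟨Q', hQ', h⟩
      exacts [.inl ⟨j, .mul_right _ hj, h⟩, .inr ⟨Q', .mul_right _ hQ', h⟩]

section Abstraction

def IsSubtreeAntichain (g : ι → FreeMagma β) : Prop :=
  ∀ i j, Subtree (g i) (g j) → i = j

lemma IsSubtreeAntichain.injective {g : ι → FreeMagma β} (hg : IsSubtreeAntichain g) :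
    Injective g :=
  fun i j h => hg i j (h ▸ .refl _)

variable (g : ι → FreeMagma β)

/-- Abstracts every outermost occurrence of a tree `g i` into the variable `i`. -/
noncomputable def abstract : FreeMagma β → FreeMagma (β ⊕ ι)
  | of c => extend g (of ∘ .inr) (fun _ => of (.inl c)) (of c)
  | mul x y => extend g (of ∘ .inr) (fun _ => abstract x * abstract y) (x * y)

lemma abstract_of {c : β} (h : ∀ i, g i ≠ of c) : abstract g (of c) = of (.inl c) :=
  extend_apply' _ _ _ (not_exists.2 h)

lemma abstract_mul {x y : FreeMagma β} (h : ∀ i, g i ≠ x * y) :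
    abstract g (x * y) = abstract g x * abstract g y :=
  extend_apply' _ _ _ (not_exists.2 h)

lemma exists_abstract_eq_of_inr {t : FreeMagma β} (h : ∃ i, g i = t) :
    ∃ i, g i = t ∧ abstract g t = of (.inr i) := by
  classical
  have key (e : FreeMagma β → FreeMagma (β ⊕ ι)) :
      extend g (of ∘ .inr) e t = of (.inr h.choose) := by
    rw [extend_def, dif_pos h]
    rfl
  cases t with
  | of c => exact ⟨_, h.choose_spec, key _⟩
  | mul x y => exact ⟨_, h.choose_spec, key _⟩

lemma abstract_apply (hg : Injective g) (i : ι) : abstract g (g i) = of (.inr i) := by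
  obtain ⟨j, hj, h⟩ := exists_abstract_eq_of_inr g ⟨i, rfl⟩
  rw [h, hg hj]

@[simp] lemma eval_abstract (t : FreeMagma β) : eval g (abstract g t) = t := by
  have of_exists {t : FreeMagma β} (h : ∃ i, g i = t) : eval g (abstract g t) = t := by
    obtain ⟨i, hi, h⟩ := exists_abstract_eq_of_inr g h
    rw [h, eval_of_inr, hi]
  induction t with
  | ih1 c =>
    by_cases h : ∃ i, g i = of c
    · exact of_exists h
    · rw [abstract_of g (not_exists.1 h)]; rfl
  | ih2 x y ihx ihy =>
    by_cases h : ∃ i, g i = x * y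
    · exact of_exists h
    · rw [abstract_mul g (not_exists.1 h), map_mul, ihx, ihy]

lemma map_inl_ne_of_inr (t : FreeMagma β) (j : ι) : map Sum.inl t ≠ of (.inr j) := by
  cases t with
  | of c => exact fun h => by cases h
  | mul x y => exact mul_ne_of _ _ _

lemma not_subtree_abstract (i : ι) (t : FreeMagma β) :
    ¬ Subtree (map Sum.inl (g i)) (abstract g t) := by
  have of_exists {s : FreeMagma β} (h : ∃ j, g j = s) :
      ¬ Subtree (map Sum.inl (g i)) (abstract g s) := by
    obtain ⟨j, -, h⟩ := exists_abstract_eq_of_inr g h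
    rw [h, subtree_of_iff]
    exact map_inl_ne_of_inr _ j
  have ne_abstract {s : FreeMagma β} (h : ∀ j, g j ≠ s) : map Sum.inl (g i) ≠ abstract g s :=
    fun he => h i (by simpa using congrArg (eval g) he)
  induction t with
  | ih1 c =>
    by_cases h : ∃ j, g j = of c
    · exact of_exists h
    · have h := not_exists.1 h
      rw [abstract_of g h, subtree_of_iff, ← abstract_of g h]
      exact ne_abstract h
  | ih2 x y ihx ihy =>
    by_cases h : ∃ j, g j = x * y
    · exact of_exists h
    · have h := not_exists.1 h
      rw [abstract_mul g h, subtree_mul_iff, ← abstract_mul g h]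
      rintro (he | hx | hy)
      exacts [ne_abstract h he, ihx hx, ihy hy]

lemma eq_of_inr_or_eq_map_inl_of_eval_eq (hg : IsSubtreeAntichain g)
    {Q : FreeMagma (β ⊕ ι)} {i : ι} (h : eval g Q = g i) :
    Q = of (.inr i) ∨ Q = map Sum.inl (g i) := by
  by_cases hv : ∃ j, Subtree (of (.inr j)) Q
  · obtain ⟨j, hj⟩ := hv
    obtain rfl : j = i := hg j i (h ▸ hj.eval g)
    left
    cases Q with
    | of s => exact (subtree_of_iff.1 hj).symm
    | mul x y =>
      rw [mul_eq, map_mul] at h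
      rw [mul_eq, subtree_mul_iff] at hj
      rcases hj with he | hx | hy
      · exact (mul_ne_of _ _ _ he.symm).elim
      · have hx := hx.eval g
        rw [eval_of_inr, ← h] at hx
        exact (not_subtree_mul_left _ _ hx).elim
      · have hy := hy.eval g
        rw [eval_of_inr, ← h] at hy
        exact (not_subtree_mul_right _ _ hy).elim
  · obtain ⟨R, rfl⟩ := exists_eq_map_inl (not_exists.1 hv)
    rw [eval_map_inl] at h
    exact .inr (h ▸ rfl)

lemma abstract_eval (hg : IsSubtreeAntichain g) {Q : FreeMagma (β ⊕ ι)}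
    (hQ : ∀ i, ¬ Subtree (map Sum.inl (g i)) Q) : abstract g (eval g Q) = Q := by
  induction Q with
  | ih1 q =>
    cases q with
    | inl c =>
      refine abstract_of g fun i h => ?_
      rcases eq_of_inr_or_eq_map_inl_of_eval_eq g hg (Q := of (.inl c)) h.symm with h | h
      · cases h
      · exact hQ i (h ▸ .refl _)
    | inr j => exact abstract_apply g hg.injective j
  | ih2 x y ihx ihy =>
    rw [map_mul, abstract_mul g fun i h => ?_, ihx fun i hi => hQ i (.mul_left _ hi),
      ihy fun i hi => hQ i (.mul_right _ hi)]
    rw [← map_mul] at h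
    rcases eq_of_inr_or_eq_map_inl_of_eval_eq g hg h.symm with h | h
    · exact mul_ne_of _ _ _ h
    · exact hQ i (h ▸ .refl _)

end Abstraction

section Replacement

variable (g u : ι → FreeMagma β)

noncomputable def replace : FreeMagma β → FreeMagma β
  | of c => extend g u id (of c)
  | mul x y => extend g u id (replace x * replace y)

lemma replace_mul (x y : FreeMagma β) :
    replace g u (x * y) = extend g u id (replace g u x * replace g u y) :=
  rfl

lemma replace_eq_self {t : FreeMagma β} (h : ∀ i, ¬ Subtree (g i) t) : replace g u t = t := by
  induction t with
  | ih1 c => exact extend_apply' _ _ _ fun ⟨i, hi⟩ => h i (hi ▸ .refl _)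
  | ih2 x y ihx ihy =>
    rw [replace_mul, ihx fun i hi => h i (.mul_left _ hi), ihy fun i hi => h i (.mul_right _ hi)]
    exact extend_apply' _ _ _ fun ⟨i, hi⟩ => h i (hi ▸ .refl _)

lemma replace_apply (hg : IsSubtreeAntichain g) (i : ι) : replace g u (g i) = u i := by
  cases ht : g i with
  | of c =>
    show extend g u id (of c) = u i
    rw [← ht]
    exact hg.injective.extend_apply _ _ _
  | mul x y =>
    rw [mul_eq] at ht
    have hx (j) : ¬ Subtree (g j) x := fun hj => by
      obtain rfl : j = i := hg j i (hj.trans (ht ▸ .mul_left y (.refl x)))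
      exact not_subtree_mul_left x y (ht ▸ hj)
    have hy (j) : ¬ Subtree (g j) y := fun hj => by
      obtain rfl : j = i := hg j i (hj.trans (ht ▸ .mul_right x (.refl y)))
      exact not_subtree_mul_right x y (ht ▸ hj)
    show extend g u id (replace g u x * replace g u y) = u i
    rw [replace_eq_self g u hx, replace_eq_self g u hy, ← ht]
    exact hg.injective.extend_apply _ _ _

lemma replace_eval (hg : IsSubtreeAntichain g) {P : FreeMagma (β ⊕ ι)}
    (hP : ∀ i, ¬ Subtree (g i) (eval u P)) : replace g u (eval g P) = eval u P := by
  induction P with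
  | ih1 q =>
    cases q with
    | inl c => exact replace_eq_self g u hP
    | inr j => exact replace_apply g u hg j
  | ih2 x y ihx ihy =>
    rw [map_mul, replace_mul, ihx fun i hi => hP i (map_mul (eval u) x y ▸ .mul_left _ hi),
      ihy fun i hi => hP i (map_mul (eval u) x y ▸ .mul_right _ hi), ← map_mul]
    exact extend_apply' _ _ _ fun ⟨i, hi⟩ => hP i (hi ▸ .refl _)

/-- A congruence because `replace` tests a node only after rewriting its children. -/
noncomputable def replaceCon : Con (FreeMagma β) where
  r x y := replace g u x = replace g u y
  iseqv := ⟨fun _ => rfl, Eq.symm, Eq.trans⟩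
  mul' {w x y z} h₁ h₂ := by
    show replace g u (w * y) = replace g u (x * z)
    rw [replace_mul, replace_mul, h₁, h₂]

lemma not_subtree_eval_abstract (hug : ∀ i j, ¬ Subtree (u j) (g i))
    (hgu : ∀ i j, ¬ Subtree (g i) (u j)) (i : ι) (t : FreeMagma β) :
    ¬ Subtree (g i) (eval u (abstract g t)) := by
  intro h
  rcases subtree_eval h with ⟨j, -, hj⟩ | ⟨Q, hQ, he⟩
  · exact hgu i j hj
  · by_cases hv : ∃ j, Subtree (of (.inr j)) Q
    · obtain ⟨j, hj⟩ := hv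
      exact hug i j (he ▸ hj.eval u)
    · obtain ⟨R, rfl⟩ := exists_eq_map_inl (not_exists.1 hv)
      rw [eval_map_inl] at he
      exact not_subtree_abstract g i t (he ▸ hQ)

theorem eq_eval_abstract (hg : IsSubtreeAntichain g) {f : (ι → FreeMagma β) → FreeMagma β}
    (hf : IsCongruencePreserving f) (hu : ∀ i j, ¬ Subtree (g i) (u j))
    (hfu : ∀ i, ¬ Subtree (g i) (f u))
    (hP : ∀ i, ¬ Subtree (g i) (eval u (abstract g (f g)))) :
    f u = eval u (abstract g (f g)) := by
  have hcon : replaceCon g u (f u) (f g) := hf _ u g fun j => by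
    show replace g u (u j) = replace g u (g j)
    rw [replace_eq_self g u (hu · j), replace_apply g u hg]
  calc f u = replace g u (f u) := (replace_eq_self g u hfu).symm
    _ = replace g u (f g) := hcon
    _ = replace g u (eval g (abstract g (f g))) := by rw [eval_abstract]
    _ = eval u (abstract g (f g)) := replace_eval g u hg hP

end Replacement

section Generic

variable {a b : β}

def comb (a : β) : ℕ → FreeMagma β
  | 0 => of a
  | k + 1 => comb a k * of a

def generic (a b : β) (k : ℕ) : FreeMagma β := comb a k * of b

@[simp] lemma length_generic (a b : β) (k : ℕ) : (generic a b k).length = k + 2 := by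
  have length_comb (k : ℕ) : (comb a k).length = k + 1 := by
    induction k <;> simp [comb, *]
  simp [generic, length_comb]

lemma not_subtree_generic_comb (hab : a ≠ b) (k l : ℕ) :
    ¬ Subtree (generic a b k) (comb a l) := by
  induction l with
  | zero => exact subtree_of_iff.not.2 (mul_ne_of _ _ _)
  | succ l ih =>
    rw [comb, subtree_mul_iff, subtree_of_iff]
    rintro (h | h | h)
    · exact hab (by injection (mul_eq_mul_iff.1 h).2 with h; exact h.symm)
    · exact ih h
    · exact mul_ne_of _ _ _ h

lemma eq_of_subtree_generic (hab : a ≠ b) {k l : ℕ}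
    (h : Subtree (generic a b k) (generic a b l)) : k = l := by
  rw [show generic a b l = comb a l * of b from rfl, subtree_mul_iff, subtree_of_iff] at h
  rcases h with h | h | h
  · have := congrArg length h
    rw [← generic, length_generic, length_generic] at this
    omega
  · exact (not_subtree_generic_comb hab k l h).elim
  · exact (mul_ne_of _ _ _ h).elim

lemma not_subtree_generic_of_length_lt {t : FreeMagma β} {k : ℕ} (h : t.length < k + 2) :
    ¬ Subtree (generic a b k) t := fun hs => by
  have := hs.length_le
  rw [length_generic] at this
  omega

def genericTuple (a b : β) (n m : ℕ) (i : Fin n) : FreeMagma β := generic a b (m + i)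

lemma isSubtreeAntichain_genericTuple (hab : a ≠ b) (n m : ℕ) :
    IsSubtreeAntichain (genericTuple a b n m) :=
  fun i j h => Fin.ext (by have := eq_of_subtree_generic hab h; omega)

variable {n : ℕ} {f : (Fin n → FreeMagma β) → FreeMagma β}

variable (a b f) in
noncomputable def polyAt (m : ℕ) : FreeMagma (β ⊕ Fin n) :=
  abstract (genericTuple a b n m) (f (genericTuple a b n m))

lemma eq_eval_polyAt (hab : a ≠ b) (hf : IsCongruencePreserving f) {u : Fin n → FreeMagma β}
    {m : ℕ} (hu : ∀ j, (u j).length < m + 2) (hfu : (f u).length < m + 2)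
    (hP : (eval u (polyAt a b f m)).length < m + 2) : f u = eval u (polyAt a b f m) :=
  eq_eval_abstract _ u (isSubtreeAntichain_genericTuple hab n m) hf
    (fun _ j => not_subtree_generic_of_length_lt (by have := hu j; omega))
    (fun _ => not_subtree_generic_of_length_lt (by omega))
    (fun _ => not_subtree_generic_of_length_lt (hP.trans_le (by omega)))

lemma eval_polyAt_genericTuple (hab : a ≠ b) (hf : IsCongruencePreserving f) {m' m : ℕ}
    (hm : m' + n ≤ m) (hF : (f (genericTuple a b n m')).length < m + 2) :
    f (genericTuple a b n m') = eval (genericTuple a b n m') (polyAt a b f m) := by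
  have incomparable (i j : Fin n) :
      ¬ Subtree (genericTuple a b n m i) (genericTuple a b n m' j) ∧
        ¬ Subtree (genericTuple a b n m' j) (genericTuple a b n m i) := by
    have := j.isLt
    constructor <;> intro h <;> have := eq_of_subtree_generic hab h <;> omega
  exact eq_eval_abstract _ _ (isSubtreeAntichain_genericTuple hab n m) hf
    (fun i j => (incomparable i j).1) (fun _ => not_subtree_generic_of_length_lt (by omega))
    (not_subtree_eval_abstract _ _ (fun i j => (incomparable i j).2)
      (fun i j => (incomparable i j).1) · _)

lemma length_polyAt_le (hab : a ≠ b) (hf : IsCongruencePreserving f) {m : ℕ} (hm : n ≤ m)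
    (hF : (f (genericTuple a b n 0)).length < m + 2) :
    (polyAt a b f m).length ≤ (f (genericTuple a b n 0)).length := by
  rw [eval_polyAt_genericTuple hab hf (by omega) hF]
  exact length_le_length_eval _ _

lemma polyAt_eq_of_le (hab : a ≠ b) (hf : IsCongruencePreserving f) {m₁ m₂ : ℕ}
    (hP : (polyAt a b f m₂).length < m₁ + 2) (hm : m₁ + n ≤ m₂)
    (hF : (f (genericTuple a b n m₁)).length < m₂ + 2) :
    polyAt a b f m₁ = polyAt a b f m₂ :=
  calc polyAt a b f m₁
      = abstract (genericTuple a b n m₁) (eval (genericTuple a b n m₁) (polyAt a b f m₂)) :=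
        congrArg _ (eval_polyAt_genericTuple hab hf hm hF)
    _ = polyAt a b f m₂ := abstract_eval _ (isSubtreeAntichain_genericTuple hab n m₁)
        fun i h => by
          have := h.length_le
          rw [length_map, genericTuple, length_generic] at this
          omega

theorem exists_forall_eq_eval (hab : a ≠ b) (hf : IsCongruencePreserving f) :
    ∃ P : FreeMagma (β ⊕ Fin n), ∀ u, f u = eval u P := by
  set C := (f (genericTuple a b n 0)).length
  set M := C + n
  refine ⟨polyAt a b f M, fun u => ?_⟩
  obtain ⟨B, hB⟩ := Finite.exists_le fun j => (u j).length
  set m := M + n + (f (genericTuple a b n M)).length + (f u).length + B + C * (B + 1)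
  have hPm : (polyAt a b f m).length ≤ C := length_polyAt_le hab hf (by omega) (by omega)
  rw [polyAt_eq_of_le hab hf (m₂ := m) (by omega) (by omega) (by omega)]
  refine eq_eval_polyAt hab hf (fun j => by have := hB j; omega) (by omega) ?_
  calc (eval u (polyAt a b f m)).length ≤ (polyAt a b f m).length * (B + 1) := length_eval_le hB _
    _ ≤ C * (B + 1) := Nat.mul_le_mul_right _ hPm
    _ < m + 2 := by omega

end Generic

end FreeMagma

theorem freeMagma_affineComplete_general {α : Type*} [Nonempty α]
    (n : ℕ) (f : (Fin n → FreeMagma (Option α)) → FreeMagma (Option α)) (hf : IsTreeCP f) :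
    ∃ P : FreeMagma (Option α ⊕ Fin n), ∀ u : Fin n → FreeMagma (Option α),
      f u = FreeMagma.lift (Sum.elim FreeMagma.of u) P := by
  obtain ⟨x⟩ := ‹Nonempty α›
  exact FreeMagma.exists_forall_eq_eval (Option.some_ne_none x).symm hf

/-- The algebra of (possibly empty) binary trees with leaves labeled in a nonempty
finite alphabet is affine complete. -/
theorem freeMagma_affineComplete {α : Type*} [Fintype α] [Nonempty α]
    (n : ℕ) (f : (Fin n → FreeMagma (Option α)) → FreeMagma (Option α)) (hf : IsTreeCP f) :
    ∃ P : FreeMagma (Option α ⊕ Fin n), ∀ u : Fin n → FreeMagma (Option α),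
      f u = FreeMagma.lift (Sum.elim FreeMagma.of u) P :=
  freeMagma_affineComplete_general n f hf
end

section
/- Let f : (Fin n → FreeMonoid α) → FreeMonoid α be congruence preserving and let a ∈ α. Then for all tuples u, v : Fin n → FreeMonoid α: (i) if |u i| = |v i| for all i then |f u| = |f v|; (ii) if |u i|_a = |v i|_a for all i then |f u|_a = |f v|_a; (iii) if |u i| − |u i|_a = |v i| − |v i|_a for all i then |f u| − |f u|_a = |f v| − |f v|_a. -/
/-!
The kernel of a monoid homomorphism `φ` out of `FreeMonoid α` is a congruence, so a congruence
preserving `f` maps tuples with equal images under `φ` to words with equal images under `φ`.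
Length, the number of occurrences of `a`, and the number of letters other than `a` are all
values of homomorphisms `FreeMonoid α →* Multiplicative ℕ` counting the letters satisfying a
predicate.
-/

/-- `f` is congruence preserving on the free monoid. -/
def IsCP {α : Type*} {n : ℕ} (f : (Fin n → FreeMonoid α) → FreeMonoid α) : Prop :=
  ∀ c : Con (FreeMonoid α), ∀ u v : Fin n → FreeMonoid α,
    (∀ i, c (u i) (v i)) → c (f u) (f v)

/-- Number of occurrences of the letter `a` in the word `w`. -/
def countLetter {α : Type*} [DecidableEq α] (a : α) (w : FreeMonoid α) : ℕ :=
  (FreeMonoid.toList w).count a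

theorem countLetter_eq_countP {α : Type*} [DecidableEq α] (a : α) (w : FreeMonoid α) :
    countLetter a w = w.toList.countP (· = a) :=
  rfl

namespace IsCP

variable {α : Type*} {n : ℕ} {f : (Fin n → FreeMonoid α) → FreeMonoid α}
  {u v : Fin n → FreeMonoid α}

theorem map_eq (hf : IsCP f) {M : Type*} [Monoid M] (φ : FreeMonoid α →* M)
    (h : ∀ i, φ (u i) = φ (v i)) : φ (f u) = φ (f v) :=
  hf (Con.ker φ) u v h

theorem countP_eq (hf : IsCP f) (p : α → Prop) [DecidablePred p]
    (h : ∀ i, (u i).toList.countP p = (v i).toList.countP p) :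
    (f u).toList.countP p = (f v).toList.countP p :=
  Multiplicative.ofAdd.injective <|
    hf.map_eq (FreeMonoid.countP p) fun i => congrArg Multiplicative.ofAdd (h i)

theorem length_eq (hf : IsCP f) (h : ∀ i, (u i).length = (v i).length) :
    (f u).length = (f v).length := by
  have hlen (w : FreeMonoid α) : w.length = w.toList.countP fun _ => True := by
    simp [FreeMonoid.length]
  simpa only [hlen] using hf.countP_eq (fun _ => True) (by simpa only [hlen] using h)

section

variable [DecidableEq α] (a : α)

theorem countLetter_eq (hf : IsCP f) (h : ∀ i, countLetter a (u i) = countLetter a (v i)) :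
    countLetter a (f u) = countLetter a (f v) := by
  simpa only [countLetter_eq_countP] using
    hf.countP_eq (· = a) (by simpa only [countLetter_eq_countP] using h)

theorem length_sub_countLetter_eq (hf : IsCP f)
    (h : ∀ i, (u i).length - countLetter a (u i) = (v i).length - countLetter a (v i)) :
    (f u).length - countLetter a (f u) = (f v).length - countLetter a (f v) := by
  have hrest (w : FreeMonoid α) : w.length - countLetter a w = w.toList.countP (· ≠ a) := by
    rw [countLetter_eq_countP, FreeMonoid.length, w.toList.length_eq_countP_add_countP (· = a)]
    simp
  simpa only [hrest] using hf.countP_eq (· ≠ a) (by simpa only [hrest] using h)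

end

end IsCP

/-- A CP function on the free monoid preserves: equality of lengths, equality of the
number of occurrences of a letter `a`, and equality of the number of occurrences of
letters other than `a`. -/
theorem cp_length_preserving {α : Type*} [DecidableEq α] {n : ℕ}
    (f : (Fin n → FreeMonoid α) → FreeMonoid α) (hf : IsCP f) (a : α) :
    (∀ u v : Fin n → FreeMonoid α,
      (∀ i, (u i).length = (v i).length) → (f u).length = (f v).length) ∧
    (∀ u v : Fin n → FreeMonoid α,
      (∀ i, countLetter a (u i) = countLetter a (v i)) →
        countLetter a (f u) = countLetter a (f v)) ∧
    (∀ u v : Fin n → FreeMonoid α,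
      (∀ i, (u i).length - countLetter a (u i) = (v i).length - countLetter a (v i)) →
        (f u).length - countLetter a (f u) = (f v).length - countLetter a (f v)) :=
  ⟨fun _ _ => hf.length_eq, fun _ _ => hf.countLetter_eq a,
    fun _ _ => hf.length_sub_countLetter_eq a⟩
end

section
/- Let α be a nonempty alphabet and let f : (Fin n → FreeMagma (Option α)) → FreeMagma (Option α) be congruence preserving on the algebra of binary trees. Then there exists a tuple k : Fin n → ℕ (the multidegree of f) such that for all u : Fin n → FreeMagma (Option α), |f u| = |f (fun _ => 𝟘)| + ∑ i, k i * |u i|, where 𝟘 = FreeMagma.of none is the empty tree. -/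
/-- The length of a tree: the number of leaves labeled by a letter of `α`
(the empty tree `FreeMagma.of none` has length 0). -/
def treeLen {α : Type*} : FreeMagma (Option α) → ℕ
  | FreeMagma.of none => 0
  | FreeMagma.of (some _) => 1
  | FreeMagma.mul t₁ t₂ => treeLen t₁ + treeLen t₂

/-!
Fix a letter `a`. A congruence-preserving `f` respects the kernel of every additive weighting of
leaves. For the length itself this makes `|f u|` a function `F` of the lengths `|u i|`; for the
length mod `d` it gives `d ∣ F m - F m'` whenever `d ∣ m i - m' i` for all `i`; and weighting the
empty leaves by `M` shows that `F` grows at most linearly along every ray `p + M • w`.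
A function `G : ℕ → ℤ` with `a - b ∣ G a - G b` and linear growth is affine: after subtracting its
secant through `0` and `1` it is divisible by `N * (N - 1)`. So `F` is affine on every ray;
comparing the rays from `0` along `x + y` and from `2 • y` along `x` at `2 • x + 2 • y` shows that
`F - F 0` is additive, hence linear, with nonnegative coefficients since `F` is.
-/

theorem eq_zero_of_dvd_sub_of_abs_le (H : ℕ → ℤ) (hdvd : ∀ a b : ℕ, ((a : ℤ) - b) ∣ H a - H b)
    (C : ℤ) (hC : ∀ M : ℕ, |H M| ≤ C * (M + 1)) (h0 : H 0 = 0) (h1 : H 1 = 0) (M : ℕ) :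
    H M = 0 := by
  -- `N * (N - 1) ∣ H N`, which is incompatible with the linear bound unless `H N = 0`.
  have hlarge : ∀ N : ℕ, 2 * C + 3 ≤ N → H N = 0 := by
    intro N hN
    have hNN : (N : ℤ) * (N - 1) ∣ H N :=
      IsCoprime.mul_dvd ⟨1, -1, by ring⟩ (by simpa [h0] using hdvd N 0)
        (by simpa [h1] using hdvd N 1)
    refine Int.eq_zero_of_abs_lt_dvd hNN ?_
    nlinarith [hC N, abs_nonneg (H N)]
  set N : ℕ := M + |H M|.toNat + (2 * C + 3).toNat + 1
  have hN : H N = 0 := hlarge N (by push_cast [N]; omega)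
  refine Int.eq_zero_of_abs_lt_dvd (m := N - M) ?_ (by push_cast [N]; omega)
  simpa [hN] using hdvd N M

theorem eq_add_mul_of_dvd_sub_of_abs_le (G : ℕ → ℤ) (hdvd : ∀ a b : ℕ, ((a : ℤ) - b) ∣ G a - G b)
    (C : ℤ) (hC : ∀ M : ℕ, |G M| ≤ C * (M + 1)) (M : ℕ) :
    G M = G 0 + M * (G 1 - G 0) := by
  set s := G 1 - G 0
  have hdvd' : ∀ a b : ℕ, ((a : ℤ) - b) ∣ (G a - (G 0 + a * s)) - (G b - (G 0 + b * s)) := by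
    intro a b
    rw [show (G a - (G 0 + a * s)) - (G b - (G 0 + b * s)) = (G a - G b) - (a - b) * s by ring]
    exact dvd_sub (hdvd a b) (dvd_mul_right _ _)
  have hC' : ∀ N : ℕ, |G N - (G 0 + N * s)| ≤ (C + |G 0| + |s|) * (N + 1) := by
    intro N
    have h1 := hC N
    have h2 := hC 0
    rw [abs_le] at h1 h2 ⊢
    constructor <;> cases abs_cases (G 0) <;> cases abs_cases s <;> nlinarith
  have := eq_zero_of_dvd_sub_of_abs_le _ hdvd' _ hC' (by simp) (by simp [s]) M
  linarith

theorem add_add_eq_of_affine_on_rays {A : Type*} [AddCommMonoid A] (F : A → ℤ)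
    (hF : ∀ p w : A, ∀ M : ℕ, F (p + M • w) = F p + M * (F (p + w) - F p)) (x y : A) :
    F (x + y) + F 0 = F x + F y := by
  have r1 := hF (2 • y) x 2
  have r2 := hF 0 y 2
  have r3 := hF x y 2
  have r4 := hF 0 (x + y) 2
  rw [← smul_add, add_comm y x, add_comm (2 • y) x] at r1
  simp only [zero_add] at r2 r4
  push_cast at r1 r2 r3 r4
  linarith

theorem eq_add_sum_of_affine_on_rays {ι : Type*} [Fintype ι] [DecidableEq ι] (F : (ι → ℕ) → ℤ)
    (hF : ∀ p w : ι → ℕ, ∀ M : ℕ, F (p + M • w) = F p + M * (F (p + w) - F p)) (m : ι → ℕ) :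
    F m = F 0 + ∑ i, m i * (F (Pi.single i 1) - F 0) := by
  let G : (ι → ℕ) →+ ℤ :=
    AddMonoidHom.mk' (fun m => F m - F 0) fun x y => by
      linarith [add_add_eq_of_affine_on_rays F hF x y]
  have hsingle : ∀ i k, G (Pi.single i k) = k * (F (Pi.single i 1) - F 0) := by
    intro i k
    have := hF 0 (Pi.single i 1) k
    simp only [zero_add, ← Pi.single_smul, smul_eq_mul, mul_one] at this
    simp [G, this]
  have := map_sum G (fun i => Pi.single i (m i)) Finset.univ
  rw [Finset.univ_sum_single] at this
  simp only [hsingle, G, AddMonoidHom.mk'_apply] at this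
  linarith

theorem exists_eq_add_sum_of_dvd_of_linear_growth {ι : Type*} [Fintype ι] (F : (ι → ℕ) → ℕ)
    (hdvd : ∀ (d : ℤ) (m m' : ι → ℕ), (∀ i, d ∣ (m i : ℤ) - m' i) → d ∣ (F m : ℤ) - F m')
    (hgrowth : ∀ p w : ι → ℕ, ∃ A B : ℕ, ∀ M : ℕ, F (p + M • w) ≤ A + M * B) :
    ∃ k : ι → ℕ, ∀ m, F m = F 0 + ∑ i, k i * m i := by
  classical
  have hray : ∀ p w : ι → ℕ, ∀ M : ℕ,
      (F (p + M • w) : ℤ) = F p + M * (F (p + w) - F p) := by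
    intro p w
    obtain ⟨A, B, hAB⟩ := hgrowth p w
    have hbound : ∀ M : ℕ, |(F (p + M • w) : ℤ)| ≤ (A + B) * (M + 1) := by
      intro M
      rw [abs_of_nonneg (by positivity)]
      have hle : (F (p + M • w) : ℤ) ≤ A + M * B := by exact_mod_cast hAB M
      nlinarith
    have hdvd' : ∀ a b : ℕ, ((a : ℤ) - b) ∣ (F (p + a • w) : ℤ) - F (p + b • w) :=
      fun a b => hdvd _ _ _ fun i => ⟨w i, by simp; ring⟩
    simpa using eq_add_mul_of_dvd_sub_of_abs_le _ hdvd' _ hbound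
  have hslope : ∀ i, (F 0 : ℤ) ≤ F (Pi.single i 1) := by
    intro i
    have := hray 0 (Pi.single i 1) (F 0 + 1)
    push_cast [zero_add] at this
    have hnonneg : (0 : ℤ) ≤ F ((F 0 + 1) • Pi.single i 1) := by positivity
    by_contra h
    nlinarith [Int.natCast_nonneg (F 0)]
  refine ⟨fun i => (F (Pi.single i 1) - F 0 : ℤ).toNat, fun m => ?_⟩
  zify
  rw [eq_add_sum_of_affine_on_rays (fun m => (F m : ℤ)) hray m]
  congr 1
  refine Finset.sum_congr rfl fun i _ => ?_
  rw [Int.toNat_of_nonneg (by linarith [hslope i]), mul_comm]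

theorem apply_iterate_mul_right {M β : Type*} [Mul M] [AddMonoid β] (φ : M → β)
    (hφ : ∀ s t, φ (s * t) = φ s + φ t) (s t : M) (k : ℕ) :
    φ ((· * t)^[k] s) = φ s + k • φ t := by
  induction k with
  | zero => simp
  | succ k ih => rw [Function.iterate_succ_apply', hφ, ih, succ_nsmul, add_assoc]

section Trees

variable {α : Type*}

def noneCount : FreeMagma (Option α) → ℕ
  | FreeMagma.of none => 1
  | FreeMagma.of (some _) => 0
  | FreeMagma.mul t₁ t₂ => noneCount t₁ + noneCount t₂

theorem treeLen_mul (s t : FreeMagma (Option α)) : treeLen (s * t) = treeLen s + treeLen t := rfl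

theorem noneCount_mul (s t : FreeMagma (Option α)) :
    noneCount (s * t) = noneCount s + noneCount t := rfl

def leafComb (a : α) (k z : ℕ) : FreeMagma (Option α) :=
  (· * FreeMagma.of (some a))^[k] ((· * FreeMagma.of none)^[z] (FreeMagma.of none))

@[simp] theorem treeLen_leafComb (a : α) (k z : ℕ) : treeLen (leafComb a k z) = k := by
  simp [leafComb, apply_iterate_mul_right treeLen treeLen_mul, treeLen]

@[simp] theorem noneCount_leafComb (a : α) (k z : ℕ) : noneCount (leafComb a k z) = z + 1 := by
  simp [leafComb, apply_iterate_mul_right noneCount noneCount_mul, noneCount, add_comm]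

variable {n : ℕ} {f : (Fin n → FreeMagma (Option α)) → FreeMagma (Option α)}

theorem IsTreeCP.apply_eq_apply_of_additive {β : Type*} [Add β] (hf : IsTreeCP f)
    (φ : FreeMagma (Option α) → β) (hφ : ∀ s t, φ (s * t) = φ s + φ t)
    {u v : Fin n → FreeMagma (Option α)} (huv : ∀ i, φ (u i) = φ (v i)) :
    φ (f u) = φ (f v) :=
  hf (Con.ker (⟨fun t => Multiplicative.ofAdd (φ t), fun s t => congrArg _ (hφ s t)⟩ :
    FreeMagma (Option α) →ₙ* Multiplicative β)) u v fun i => congrArg Multiplicative.ofAdd (huv i)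

def lenProfile (f : (Fin n → FreeMagma (Option α)) → FreeMagma (Option α)) (a : α)
    (m : Fin n → ℕ) : ℕ :=
  treeLen (f fun i => leafComb a (m i) 0)

theorem IsTreeCP.treeLen_apply (hf : IsTreeCP f) (a : α) (u : Fin n → FreeMagma (Option α)) :
    treeLen (f u) = lenProfile f a fun i => treeLen (u i) :=
  hf.apply_eq_apply_of_additive treeLen treeLen_mul fun i => by simp

theorem IsTreeCP.dvd_lenProfile_sub (hf : IsTreeCP f) (a : α) (d : ℤ) (m m' : Fin n → ℕ)
    (h : ∀ i, d ∣ (m i : ℤ) - m' i) :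
    d ∣ (lenProfile f a m : ℤ) - lenProfile f a m' := by
  have := hf.apply_eq_apply_of_additive (fun t => ((treeLen t : ℤ) : ZMod d.natAbs))
    (fun s t => by push_cast [treeLen_mul]; rfl) (u := fun i => leafComb a (m' i) 0)
    (v := fun i => leafComb a (m i) 0)
    fun i => (ZMod.intCast_eq_intCast_iff_dvd_sub _ _ _).mpr (by simpa [Int.natAbs_dvd] using h i)
  exact Int.natAbs_dvd.mp ((ZMod.intCast_eq_intCast_iff_dvd_sub _ _ _).mp this)

/-- Weighting empty leaves by `M` is additive, and it gives a tree of length `p + M * w` with one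
empty leaf the same weight as a tree with `p` letters and `w + 1` empty leaves. -/
theorem IsTreeCP.lenProfile_le (hf : IsTreeCP f) (a : α) (p w : Fin n → ℕ) :
    ∃ A B : ℕ, ∀ M : ℕ, lenProfile f a (p + M • w) ≤ A + M * B := by
  set u := fun i => leafComb a (p i) (w i)
  refine ⟨treeLen (f u), noneCount (f u), fun M => ?_⟩
  have := hf.apply_eq_apply_of_additive (fun t => treeLen t + M * noneCount t)
    (fun s t => by simp only [treeLen_mul, noneCount_mul]; ring)
    (u := fun i => leafComb a ((p + M • w) i) 0) (v := u) fun i => by simp [u]; ring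
  unfold lenProfile
  omega

end Trees

/-- Every CP function on the algebra of binary trees over a nonempty alphabet has a
multidegree: length of the value is an affine function of the lengths of the
arguments. -/
theorem tree_cp_multidegree {α : Type*} [Nonempty α] {n : ℕ}
    (f : (Fin n → FreeMagma (Option α)) → FreeMagma (Option α)) (hf : IsTreeCP f) :
    ∃ k : Fin n → ℕ, ∀ u : Fin n → FreeMagma (Option α),
      treeLen (f u) = treeLen (f (fun _ => FreeMagma.of none)) + ∑ i, k i * treeLen (u i) := by
  obtain ⟨a⟩ := ‹Nonempty α›
  obtain ⟨k, hk⟩ := exists_eq_add_sum_of_dvd_of_linear_growth (lenProfile f a)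
    (hf.dvd_lenProfile_sub a) (hf.lenProfile_le a)
  exact ⟨k, fun u => by rw [hf.treeLen_apply a, hk]; rfl⟩
end

section
/- Let a, b be distinct letters of α, let n > 1, let τ = a^n · b · a · b^n, and let v be a word with |v| < |τ| = 2n+2. Then for every word t ∈ FreeMonoid α there exists a unique word t' such that t ~_{τ,v} t' and t' is τ-irreducible (τ is not a factor of t'). -/
/-- `w` is a factor of `t`. -/
def IsFactor {α : Type*} (w t : FreeMonoid α) : Prop := ∃ u u' : FreeMonoid α, t = u * w * u'

/-!
The word `τ = aⁿbabⁿ` (with `n ≥ 2`) is unbordered: none of its nonempty proper prefixes is also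
a suffix. Hence two occurrences of `τ` in a word are either equal or disjoint, so any two
rewrites `τ → v` of the same word can be joined by one more rewrite on each side. The rewriting
system is therefore locally confluent, and it terminates since `|v| < |τ|`. Its normal forms are
exactly the `τ`-irreducible words, and by the Church–Rosser property every class of the
congruence generated by `τ ~ v` contains exactly one of them.
-/

section Rewriting

variable {M : Type*} [Monoid M]

def Rewrites (τ v x y : M) : Prop := ∃ u u', x = u * τ * u' ∧ y = u * v * u'

variable {τ v x y : M}

theorem Rewrites.mul_mul (h : Rewrites τ v x y) (u w : M) :
    Rewrites τ v (u * x * w) (u * y * w) := by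
  obtain ⟨s, s', rfl, rfl⟩ := h
  exact ⟨u * s, s' * w, by simp only [mul_assoc], by simp only [mul_assoc]⟩

theorem reflTransGen_rewrites_mul {x' y' : M} (hx : Relation.ReflTransGen (Rewrites τ v) x x')
    (hy : Relation.ReflTransGen (Rewrites τ v) y y') :
    Relation.ReflTransGen (Rewrites τ v) (x * y) (x' * y') :=
  (hx.lift (· * y) fun _ _ h => by simpa using h.mul_mul 1 y).trans
    (hy.lift (x' * ·) fun _ _ h => by simpa using h.mul_mul x' 1)

theorem conGen_of_reflTransGen_rewrites (h : Relation.ReflTransGen (Rewrites τ v) x y) :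
    conGen (fun x y => x = τ ∧ y = v) x y := by
  induction h with
  | refl => exact (conGen _).refl x
  | tail _ hstep ih =>
    obtain ⟨u, u', rfl, rfl⟩ := hstep
    exact (conGen _).trans ih <|
      (conGen _).mul ((conGen _).mul ((conGen _).refl u) (ConGen.Rel.of τ v ⟨rfl, rfl⟩))
        ((conGen _).refl u')

theorem join_reflTransGen_rewrites_of_conGen
    (hconf : ∀ a b c, Rewrites τ v a b → Rewrites τ v a c →
      ∃ d, Relation.ReflGen (Rewrites τ v) b d ∧ Relation.ReflTransGen (Rewrites τ v) c d)
    (h : conGen (fun x y => x = τ ∧ y = v) x y) :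
    Relation.Join (Relation.ReflTransGen (Rewrites τ v)) x y := by
  let c : Con M :=
    { r := Relation.Join (Relation.ReflTransGen (Rewrites τ v))
      iseqv := Relation.equivalence_join_reflTransGen hconf
      mul' := by
        rintro x x' y y' ⟨d, hxd, hx'd⟩ ⟨e, hye, hy'e⟩
        exact ⟨d * e, reflTransGen_rewrites_mul hxd hye, reflTransGen_rewrites_mul hx'd hy'e⟩ }
  refine (Con.conGen_le (c := c)).2 ?_ h
  rintro _ _ ⟨rfl, rfl⟩
  exact ⟨_, .single ⟨1, 1, by simp, by simp⟩, .refl⟩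

end Rewriting

namespace FreeMonoid

variable {α : Type*} {τ v : FreeMonoid α}

theorem mul_eq_mul_iff {a b c d : FreeMonoid α} :
    a * b = c * d ↔ (∃ e, c = a * e ∧ b = e * d) ∨ ∃ e, a = c * e ∧ d = e * b := by
  simpa only [← toList.injective.eq_iff, toList_mul, toList.surjective.exists] using
    List.append_eq_append_iff

theorem mul_inj_of_length_eq {a b c d : FreeMonoid α} (h : a * b = c * d)
    (hl : a.length = c.length) : a = c ∧ b = d :=
  (List.append_inj (congrArg toList h) hl).imp (congrArg ofList) (congrArg ofList)

def Unbordered (τ : FreeMonoid α) : Prop :=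
  ∀ u w w' : FreeMonoid α, τ = u * w → τ = w' * u → u = 1 ∨ u = τ

theorem Unbordered.of_getElem?_ne
    (h : ∀ m, 0 < m → m < τ.length → ∃ i < m, τ.toList[i]? ≠ τ.toList[τ.length - m + i]?) :
    τ.Unbordered := by
  intro u w w' hw hw'
  by_contra! hu
  have hlen : w'.length + u.length = τ.length := by rw [hw', length_mul]
  have hu₀ : 0 < u.length := by
    by_contra! h0; exact hu.1 (length_eq_zero.1 (by omega))
  have hw'₀ : 0 < w'.length := by
    by_contra! h0; exact hu.2 (by rw [hw', length_eq_zero.1 (by omega : w'.length = 0), one_mul])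
  obtain ⟨i, hi, hne⟩ := h u.length hu₀ (by omega)
  have hpre : τ.toList[i]? = u.toList[i]? := by rw [hw, toList_mul, List.getElem?_append_left hi]
  have hsuf : τ.toList[w'.length + i]? = u.toList[i]? := by
    rw [hw', toList_mul]
    exact (List.getElem?_append_right (Nat.le_add_right _ i)).trans
      (by rw [Nat.add_sub_cancel_left])
  exact hne (by rw [show τ.length - u.length = w'.length by omega, hpre, hsuf])

theorem unbordered_pow_mul_mul_mul_pow {a b : α} (hab : a ≠ b) {n : ℕ} (hn : 1 < n) :
    (of a ^ n * of b * of a * of b ^ n).Unbordered := by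
  refine Unbordered.of_getElem?_ne fun m hm₀ hm => ?_
  have hL : toList (of a ^ n * of b * of a * of b ^ n) =
      List.replicate n a ++ b :: a :: List.replicate n b := by
    simp [toList_mul, ← List.prod_replicate, toList_prod]
  have hlen : (of a ^ n * of b * of a * of b ^ n).length = 2 * n + 2 := by
    simp [length, hL]; omega
  rw [hlen] at hm ⊢
  rw [hL]
  -- the prefix and the suffix of length `m` read `a` and `b` respectively at position `i`
  obtain ⟨i, hi, hia, hjb⟩ :
      ∃ i < m, i < n ∧ (2 * n + 2 - m + i = n ∨ n + 2 ≤ 2 * n + 2 - m + i) := by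
    obtain hm' | rfl | hm' : m ≤ n ∨ m = n + 1 ∨ n + 2 ≤ m := by omega
    · exact ⟨0, hm₀, by omega, by omega⟩
    · exact ⟨1, by omega, hn, by omega⟩
    · exact ⟨m - (n + 2), by omega, by omega, by omega⟩
  refine ⟨i, hi, ?_⟩
  simp only [List.getElem?_append, List.getElem?_cons, List.getElem?_replicate,
    List.length_replicate]
  split_ifs <;> simp_all <;> omega

theorem Unbordered.eq_mul_mul_of_mul_mul_eq (hτ : τ.Unbordered) {x y x' y' : FreeMonoid α}
    (h : x * τ * y = x' * τ * y') (hlt : x.length < x'.length) :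
    ∃ p, x' = x * τ * p ∧ y = p * τ * y' := by
  simp only [mul_assoc] at h ⊢
  obtain ⟨d, rfl, hd⟩ | ⟨e, rfl, -⟩ := mul_eq_mul_iff.1 h
  · obtain ⟨p, rfl, rfl⟩ | ⟨e, hτd, hτe⟩ := mul_eq_mul_iff.1 hd
    · exact ⟨p, rfl, rfl⟩
    · obtain ⟨f, rfl, -⟩ | ⟨f, hτf, -⟩ := mul_eq_mul_iff.1 hτe
      · have := congrArg length hτd; simp only [length_mul] at this hlt; omega
      · -- the overlap `e` of the two occurrences is a border of `τ`
        obtain rfl | rfl := hτ e f d hτf hτd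
        · rw [mul_one] at hτd; subst hτd
          exact ⟨1, by simp, by simpa using hτe.symm⟩
        · have := congrArg length hτd; simp only [length_mul] at this hlt; omega
  · simp only [length_mul] at hlt; omega

theorem Unbordered.rewrites_confluent (hτ : τ.Unbordered) (t t₁ t₂ : FreeMonoid α)
    (h₁ : Rewrites τ v t t₁) (h₂ : Rewrites τ v t t₂) :
    ∃ d, Relation.ReflGen (Rewrites τ v) t₁ d ∧ Relation.ReflTransGen (Rewrites τ v) t₂ d := by
  obtain ⟨x, y, rfl, rfl⟩ := h₁
  obtain ⟨x', y', h, rfl⟩ := h₂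
  rcases lt_trichotomy x.length x'.length with hlt | heq | hgt
  · obtain ⟨p, rfl, rfl⟩ := hτ.eq_mul_mul_of_mul_mul_eq h hlt
    refine ⟨x * v * p * v * y', .single ⟨x * v * p, y', ?_, ?_⟩,
      .single ⟨x, p * v * y', ?_, ?_⟩⟩ <;> simp only [mul_assoc]
  · obtain ⟨hx, rfl⟩ := mul_inj_of_length_eq h (by simp only [length_mul, heq])
    obtain rfl := mul_right_cancel hx
    exact ⟨_, .refl, .refl⟩
  · obtain ⟨p, rfl, rfl⟩ := hτ.eq_mul_mul_of_mul_mul_eq h.symm hgt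
    refine ⟨x' * v * p * v * y, .single ⟨x', p * v * y, ?_, ?_⟩,
      .single ⟨x' * v * p, y, ?_, ?_⟩⟩ <;> simp only [mul_assoc]

theorem isFactor_iff_exists_rewrites {t : FreeMonoid α} :
    IsFactor τ t ↔ ∃ t', Rewrites τ v t t' :=
  ⟨fun ⟨u, u', h⟩ => ⟨u * v * u', u, u', h, rfl⟩, fun ⟨_, u, u', h, _⟩ => ⟨u, u', h⟩⟩

theorem exists_reflTransGen_rewrites_not_isFactor (hv : v.length < τ.length)
    (t : FreeMonoid α) : ∃ t', Relation.ReflTransGen (Rewrites τ v) t t' ∧ ¬ IsFactor τ t' := by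
  by_cases ht : IsFactor τ t
  · obtain ⟨u, u', rfl⟩ := ht
    obtain ⟨t', ht', hirr⟩ := exists_reflTransGen_rewrites_not_isFactor hv (u * v * u')
    exact ⟨t', .head ⟨u, u', rfl, rfl⟩ ht', hirr⟩
  · exact ⟨t, .refl, ht⟩
termination_by t.length
decreasing_by subst_vars; simp only [length_mul]; omega

theorem eq_of_not_isFactor_of_reflTransGen_rewrites {t t' : FreeMonoid α}
    (ht : ¬ IsFactor τ t) (h : Relation.ReflTransGen (Rewrites τ v) t t') : t' = t :=
  (Relation.reflTransGen_iff_eq fun t' h' => ht (isFactor_iff_exists_rewrites.2 ⟨t', h'⟩)).1 h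

theorem Unbordered.existsUnique_conGen_not_isFactor (hτ : τ.Unbordered)
    (hv : v.length < τ.length) (t : FreeMonoid α) :
    ∃! t', conGen (fun x y => x = τ ∧ y = v) t t' ∧ ¬ IsFactor τ t' := by
  obtain ⟨t', ht', hirr⟩ := exists_reflTransGen_rewrites_not_isFactor hv t
  refine ⟨t', ⟨conGen_of_reflTransGen_rewrites ht', hirr⟩, fun s ⟨hs, hsirr⟩ => ?_⟩
  obtain ⟨d, hsd, ht'd⟩ := join_reflTransGen_rewrites_of_conGen hτ.rewrites_confluent <|
    (conGen _).trans ((conGen _).symm hs) (conGen_of_reflTransGen_rewrites ht')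
  rw [← eq_of_not_isFactor_of_reflTransGen_rewrites hsirr hsd,
    eq_of_not_isFactor_of_reflTransGen_rewrites hirr ht'd]

end FreeMonoid

/-- For `τ = aⁿbabⁿ` and `|v| < |τ|`, every word `t` has a unique `τ`-irreducible
canonical representative modulo the congruence generated by `τ ~ v`. -/
theorem word_unique_canonical_representative {α : Type*} (a b : α) (hab : a ≠ b)
    (n : ℕ) (hn : 1 < n)
    (τ : FreeMonoid α)
    (hτ : τ = (FreeMonoid.of a) ^ n * FreeMonoid.of b * FreeMonoid.of a * (FreeMonoid.of b) ^ n)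
    (v : FreeMonoid α) (hv : v.length < τ.length) (t : FreeMonoid α) :
    ∃! t' : FreeMonoid α,
      (conGen (fun x y => x = τ ∧ y = v)) t t' ∧ ¬ IsFactor τ t' := by
  subst hτ
  exact (FreeMonoid.unbordered_pow_mul_mul_mul_pow hab hn).existsUnique_conGen_not_isFactor hv t
end

section
/- Let α have at least two distinct letters and let P, Q ∈ FreeMonoid (α ⊕ Fin n) be polynomials with the same multidegree, i.e. for each i the number of occurrences of Sum.inr i in P equals that in Q. If for every assignment u : Fin n → α of single letters the polynomial functions of P and Q agree (substituting the one-letter word u i for the variable Sum.inr i), then P = Q. -/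
/-- Number of occurrences of the variable `Sum.inr i` in the polynomial `P`. -/
def varCount {α : Type*} {n : ℕ} (i : Fin n) (P : FreeMonoid (α ⊕ Fin n)) : ℕ :=
  ((FreeMonoid.toList P).filterMap Sum.getRight?).count i

/-!
Substituting one-letter words is letter-by-letter relabelling, `FreeMonoid.map (Sum.elim id u)`.
Since `α` has two distinct letters, these relabellings jointly separate the symbols of
`α ⊕ Fin n`: a constant assignment avoiding a given letter tells a letter from a variable, and
an assignment taking different values at `i` and `j` tells two variables apart. Words whose
images under a jointly separating family of relabellings all agree are equal, position by position.
-/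

theorem List.eq_of_forall_map_eq {ι β γ : Type*} [Nonempty ι] (f : ι → β → γ)
    (hf : ∀ x y, (∀ i, f i x = f i y) → x = y) :
    ∀ {l l' : List β}, (∀ i, l.map (f i) = l'.map (f i)) → l = l'
  | [], [], _ => rfl
  | [], _ :: _, h => by simpa using h (Classical.arbitrary ι)
  | _ :: _, [], h => by simpa using h (Classical.arbitrary ι)
  | x :: l, y :: l', h => by
    simp only [List.map_cons, List.cons.injEq] at h
    rw [hf x y fun i => (h i).1, eq_of_forall_map_eq f hf fun i => (h i).2]

theorem FreeMonoid.eq_of_forall_map_eq {ι β γ : Type*} [Nonempty ι] (f : ι → β → γ)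
    (hf : ∀ x y, (∀ i, f i x = f i y) → x = y) {P Q : FreeMonoid β}
    (h : ∀ i, FreeMonoid.map (f i) P = FreeMonoid.map (f i) Q) : P = Q :=
  FreeMonoid.toList.injective <| List.eq_of_forall_map_eq f hf fun i => by
    simpa only [FreeMonoid.toList_map] using congrArg FreeMonoid.toList (h i)

theorem Sum.eq_of_forall_elim_id_eq {α ι : Type*} [Nontrivial α] {x y : α ⊕ ι}
    (h : ∀ u : ι → α, Sum.elim id u x = Sum.elim id u y) : x = y := by
  classical
  rcases x with c | i <;> rcases y with d | j
  · simpa using h fun _ => c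
  · obtain ⟨e, he⟩ := exists_ne c
    exact absurd (h fun _ => e) (by simpa using he.symm)
  · obtain ⟨e, he⟩ := exists_ne d
    exact absurd (h fun _ => e) (by simpa using he)
  · obtain rfl | hij := eq_or_ne i j
    · rfl
    obtain ⟨c, d, hcd⟩ := exists_pair_ne α
    have := h (Function.update (fun _ => d) i c)
    simp only [Sum.elim_inr, Function.update_self, Function.update_of_ne hij.symm] at this
    exact absurd this hcd

theorem FreeMonoid.lift_sumElim_of_eq_map {α ι : Type*} (u : ι → α) :
    FreeMonoid.lift (Sum.elim FreeMonoid.of (fun i => FreeMonoid.of (u i))) =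
      FreeMonoid.map (Sum.elim id u) := by
  rw [← FreeMonoid.lift_of_comp_eq_map]
  congr 1
  ext (c | i) <;> rfl

theorem word_polynomials_eq_of_agree_on_letters_general {α : Type*} (a b : α) (hab : a ≠ b)
    {n : ℕ} (P Q : FreeMonoid (α ⊕ Fin n))
    (h : ∀ u : Fin n → α,
      FreeMonoid.lift (Sum.elim FreeMonoid.of (fun i => FreeMonoid.of (u i))) P =
      FreeMonoid.lift (Sum.elim FreeMonoid.of (fun i => FreeMonoid.of (u i))) Q) :
    P = Q := by
  have : Nontrivial α := ⟨⟨a, b, hab⟩⟩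
  refine FreeMonoid.eq_of_forall_map_eq (fun u : Fin n → α => Sum.elim id u)
    (fun _ _ => Sum.eq_of_forall_elim_id_eq) fun u => ?_
  simpa only [FreeMonoid.lift_sumElim_of_eq_map] using h u

/-- Two word polynomials with the same multidegree whose polynomial functions agree on
all tuples of single letters are equal. -/
theorem word_polynomials_eq_of_agree_on_letters {α : Type*} (a b : α) (hab : a ≠ b)
    {n : ℕ} (P Q : FreeMonoid (α ⊕ Fin n))
    (hdeg : ∀ i, varCount i P = varCount i Q)
    (h : ∀ u : Fin n → α,
      FreeMonoid.lift (Sum.elim FreeMonoid.of (fun i => FreeMonoid.of (u i))) P =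
      FreeMonoid.lift (Sum.elim FreeMonoid.of (fun i => FreeMonoid.of (u i))) Q) :
    P = Q :=
  word_polynomials_eq_of_agree_on_letters_general a b hab P Q h
end

section
/- Let p ≥ 2 and let f : (Fin n → (Fin p → ℕ)) → (Fin p → ℕ) be congruence preserving on the additive monoid ℕ^p. Then there exists a tuple k : Fin n → ℕ such that for all u : Fin n → (Fin p → ℕ): (i) ∑_j (f u) j = ∑_j (f 0) j + ∑_i k i * (∑_j (u i) j), and (ii) for every j, (f u) j = (f 0) j + ∑_i k i * (u i) j, where 0 denotes the constant tuple of zero vectors. -/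
/-- `f` is congruence preserving on the additive monoid `ℕ^p`. -/
def IsAddCP {p n : ℕ} (f : (Fin n → (Fin p → ℕ)) → (Fin p → ℕ)) : Prop :=
  ∀ c : AddCon (Fin p → ℕ), ∀ u v : Fin n → (Fin p → ℕ),
    (∀ i, c (u i) (v i)) → c (f u) (f v)

/-!
Congruence preservation for the kernel of the `j`-th projection makes `f u j` a function `g_j`
of the `j`-th coordinates of the `u i`; for the kernel of the coordinate sum it makes
`∑ j, g_j (c j)` a function of `∑ j, c j`. Moving mass between two coordinates (here `p ≥ 2` is
needed) shows that the `g_j` differ by constants and satisfy `g (a + b) + g 0 = g a + g b`, and an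
`ℕ`-valued solution of this equation on `ℕ^n` is affine with natural coefficients.
-/

open Finset Function

section Cauchy

variable {M : Type*} [AddMonoid M] {g : M → ℕ}

lemma map_nsmul_add_mul_map_zero (hg : ∀ a b, g (a + b) + g 0 = g a + g b) (m : ℕ) (a : M) :
    g (m • a) + m * g 0 = g 0 + m * g a := by
  induction m with
  | zero => simp
  | succ m ih =>
    rw [succ_nsmul]
    linarith [hg (m • a) a]

lemma map_zero_le_of_map_add (hg : ∀ a b, g (a + b) + g 0 = g a + g b) (a : M) :
    g 0 ≤ g a := by
  by_contra! h
  have hm := map_nsmul_add_mul_map_zero hg (g 0 + 1) a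
  nlinarith [Nat.mul_le_mul_left (g 0 + 1) (Nat.succ_le_of_lt h)]

theorem exists_eq_map_zero_add_sum_mul {ι : Type*} [Fintype ι] {g : (ι → ℕ) → ℕ}
    (hg : ∀ a b, g (a + b) + g 0 = g a + g b) :
    ∃ k : ι → ℕ, ∀ a, g a = g 0 + ∑ i, k i * a i := by
  classical
  have hle := map_zero_le_of_map_add hg
  let φ : (ι → ℕ) →+ ℕ :=
    { toFun a := g a - g 0
      map_zero' := Nat.sub_self _
      map_add' a b := by have := hg a b; have := hle a; have := hle b; omega }
  refine ⟨fun i => φ fun j => if i = j then 1 else 0, fun a => ?_⟩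
  have hφ := φ.toNatLinearMap.pi_apply_eq_sum_univ a
  simp only [AddMonoidHom.coe_toNatLinearMap, smul_eq_mul] at hφ
  simp only [mul_comm _ (a _), ← hφ]
  have := hle a
  show g a = g 0 + (g a - g 0)
  omega

end Cauchy

section Exchange

variable {ι M N : Type*} [Fintype ι] [DecidableEq ι]

lemma sum_apply_update_add [AddCommMonoid N] (g : ι → M → N) (c : ι → M) (j : ι) (x : M) :
    ∑ l, g l (update c j x l) + g j (c j) = ∑ l, g l (c l) + g j x := by
  simp_rw [apply_update (fun l => g l) c j x]
  rw [sum_update_of_mem (mem_univ j), sum_eq_add_sum_sdiff_singleton_of_mem (mem_univ j)]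
  abel

/-- Compare `a` in slot `j` and `b` in slot `j'` with `a + b` in slot `j`. -/
lemma map_add_add_map_zero_of_sum_congr [AddCommMonoid M] [AddCancelCommMonoid N] (g : ι → M → N)
    (hg : ∀ c c' : ι → M, ∑ l, c l = ∑ l, c' l → ∑ l, g l (c l) = ∑ l, g l (c' l))
    {j j' : ι} (hjj' : j ≠ j') (a b : M) :
    g j (a + b) + g j' 0 = g j a + g j' b := by
  let G : (ι → M) → N := fun c => ∑ l, g l (c l)
  have h₁ : G (update (update 0 j a) j' b) + g j' 0 = G (update 0 j a) + g j' b := by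
    simpa [update_of_ne hjj'.symm] using sum_apply_update_add g (update 0 j a) j' b
  have h₂ : G (update 0 j a) + g j 0 = G 0 + g j a := sum_apply_update_add g 0 j a
  have h₃ : G (update 0 j (a + b)) + g j 0 = G 0 + g j (a + b) :=
    sum_apply_update_add g 0 j (a + b)
  have h₄ : G (update (update 0 j a) j' b) = G (update 0 j (a + b)) := by
    refine hg _ _ ?_
    rw [sum_update_of_mem (mem_univ _), sum_update_of_mem (by simpa using hjj'),
      sum_update_of_mem (mem_univ _)]
    simp [add_comm]
  refine add_left_cancel (a := G 0) ?_
  calc G 0 + (g j (a + b) + g j' 0)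
      = G (update 0 j (a + b)) + g j 0 + g j' 0 := by rw [h₃]; abel
    _ = G (update (update 0 j a) j' b) + g j' 0 + g j 0 := by rw [h₄]; abel
    _ = G 0 + (g j a + g j' b) := by rw [h₁, add_right_comm, h₂]; abel

end Exchange

def coordFun {p n : ℕ} (f : (Fin n → Fin p → ℕ) → Fin p → ℕ) (j : Fin p) (a : Fin n → ℕ) : ℕ :=
  f (fun i => Pi.single j (a i)) j

lemma coordFun_zero {p n : ℕ} (f : (Fin n → Fin p → ℕ) → Fin p → ℕ) (j : Fin p) :
    coordFun f j 0 = f 0 j := by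
  simp only [coordFun, Pi.zero_apply, Pi.single_zero]
  rfl

namespace IsAddCP

variable {p n : ℕ} {f : (Fin n → Fin p → ℕ) → Fin p → ℕ}

lemma map_eq_of_forall_map_eq {F M : Type*} [Add M] [FunLike F (Fin p → ℕ) M]
    [AddHomClass F (Fin p → ℕ) M] (hf : IsAddCP f) (φ : F) {u v : Fin n → Fin p → ℕ}
    (h : ∀ i, φ (u i) = φ (v i)) : φ (f u) = φ (f v) :=
  (AddCon.ker_rel φ).1 (hf (AddCon.ker φ) u v fun i => (AddCon.ker_rel φ).2 (h i))

lemma apply_eq_of_forall_apply_eq (hf : IsAddCP f) (j : Fin p) {u v : Fin n → Fin p → ℕ}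
    (h : ∀ i, u i j = v i j) : f u j = f v j :=
  hf.map_eq_of_forall_map_eq (Pi.evalAddMonoidHom (fun _ => ℕ) j) h

lemma sum_eq_of_forall_sum_eq (hf : IsAddCP f) {u v : Fin n → Fin p → ℕ}
    (h : ∀ i, ∑ j, u i j = ∑ j, v i j) : ∑ j, f u j = ∑ j, f v j := by
  simpa using hf.map_eq_of_forall_map_eq (∑ j, Pi.evalAddMonoidHom (fun _ => ℕ) j)
    (by simpa using h)

lemma apply_eq_coordFun (hf : IsAddCP f) (u : Fin n → Fin p → ℕ) (j : Fin p) :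
    f u j = coordFun f j (fun i => u i j) :=
  hf.apply_eq_of_forall_apply_eq j fun i => by simp

lemma sum_coordFun_congr (hf : IsAddCP f) {c c' : Fin p → Fin n → ℕ}
    (h : ∑ l, c l = ∑ l, c' l) : ∑ l, coordFun f l (c l) = ∑ l, coordFun f l (c' l) := by
  simp only [← hf.apply_eq_coordFun (fun i l => c l i), ← hf.apply_eq_coordFun (fun i l => c' l i)]
  exact hf.sum_eq_of_forall_sum_eq fun i => by simpa using congrFun h i

lemma coordFun_add_coordFun_zero (hf : IsAddCP f) (j j' : Fin p) (a : Fin n → ℕ) :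
    coordFun f j a + coordFun f j' 0 = coordFun f j 0 + coordFun f j' a := by
  rcases eq_or_ne j j' with rfl | hjj'
  · exact add_comm _ _
  · simpa using map_add_add_map_zero_of_sum_congr (coordFun f) (fun _ _ => hf.sum_coordFun_congr)
      hjj' 0 a

lemma coordFun_add (hf : IsAddCP f) (hp : 2 ≤ p) (j : Fin p) (a b : Fin n → ℕ) :
    coordFun f j (a + b) + coordFun f j 0 = coordFun f j a + coordFun f j b := by
  have : Nontrivial (Fin p) := Fin.nontrivial_iff_two_le.2 hp
  obtain ⟨j', hj'⟩ := exists_ne j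
  have := map_add_add_map_zero_of_sum_congr (coordFun f) (fun _ _ => hf.sum_coordFun_congr)
    hj'.symm a b
  have := hf.coordFun_add_coordFun_zero j' j b
  omega

end IsAddCP

/-- Every CP function on `ℕ^p` (`p ≥ 2`) has a multidegree, affinely controlling both
the total sum of the value and each of its components. -/
theorem nat_pow_cp_multidegree {p n : ℕ} (hp : 2 ≤ p)
    (f : (Fin n → (Fin p → ℕ)) → (Fin p → ℕ)) (hf : IsAddCP f) :
    ∃ k : Fin n → ℕ,
      (∀ u : Fin n → (Fin p → ℕ),
        ∑ j, f u j = ∑ j, f (fun _ => 0) j + ∑ i, k i * ∑ j, u i j) ∧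
      (∀ u : Fin n → (Fin p → ℕ), ∀ j,
        f u j = f (fun _ => 0) j + ∑ i, k i * u i j) := by
  let j₀ : Fin p := ⟨0, by omega⟩
  obtain ⟨k, hk⟩ := exists_eq_map_zero_add_sum_mul (hf.coordFun_add hp j₀)
  have hcoord (u : Fin n → Fin p → ℕ) (j : Fin p) : f u j = f 0 j + ∑ i, k i * u i j := by
    have := hf.coordFun_add_coordFun_zero j j₀ (fun i => u i j)
    rw [hk (fun i => u i j)] at this
    rw [hf.apply_eq_coordFun u j, ← coordFun_zero f j]
    omega
  refine ⟨k, fun u => ?_, hcoord⟩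
  rw [sum_congr rfl fun j _ => hcoord u j, sum_add_distrib, sum_comm]
  simp only [mul_sum]
  rfl
end

section
/- Let a, b be the two letters of the two-letter alphabet α = Fin 2, and define f : FreeMonoid α → FreeMonoid α by f(w) = a^{|w|_a} · b^{|w|_b}. Then f is not congruence preserving: there exists a multiplicative congruence c on FreeMonoid α and words u, v with c u v but ¬ c (f u) (f v). (A witness is the congruence relating two words iff they are both empty or have the same first letter.) -/
/-!
Words with the same first letter form a congruence, since the first letter of `u * v` is that of
`u` unless `u` is empty. It relates `ba` and `b`, but sorting sends them to `ab` and `b`, whose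
first letters differ.
-/

def headCon (α : Type*) : Con (FreeMonoid α) where
  r u v := u.toList.head? = v.toList.head?
  iseqv := ⟨fun _ => rfl, Eq.symm, Eq.trans⟩
  mul' hu hv := by simp only [FreeMonoid.toList_mul, List.head?_append, hu, hv]

theorem headCon_iff {α : Type*} {u v : FreeMonoid α} :
    headCon α u v ↔ u.toList.head? = v.toList.head? := Iff.rfl

theorem headCon_sort_not_congr {α : Type*} [DecidableEq α] {a b : α} (hab : a ≠ b)
    (f : FreeMonoid α → FreeMonoid α)
    (hf : ∀ w, f w = FreeMonoid.of a ^ w.toList.count a * FreeMonoid.of b ^ w.toList.count b) :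
    headCon α (.of b * .of a) (.of b) ∧ ¬ headCon α (f (.of b * .of a)) (f (.of b)) :=
  ⟨rfl, by simp [headCon_iff, hf, hab, hab.symm]⟩

/-- The function `w ↦ a^{|w|_a} · b^{|w|_b}` on the free monoid over the two-letter
alphabet `Fin 2` (with `a = 0`, `b = 1`) is not congruence preserving. -/
theorem sort_function_not_cp (a b : Fin 2) (ha : a = 0) (hb : b = 1)
    (f : FreeMonoid (Fin 2) → FreeMonoid (Fin 2))
    (hf : ∀ w : FreeMonoid (Fin 2),
      f w = (FreeMonoid.of a) ^ ((FreeMonoid.toList w).count a) *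
            (FreeMonoid.of b) ^ ((FreeMonoid.toList w).count b)) :
    ∃ c : Con (FreeMonoid (Fin 2)), ∃ u v : FreeMonoid (Fin 2),
      c u v ∧ ¬ c (f u) (f v) :=
  ⟨headCon _, _, _, headCon_sort_not_congr (by simp [ha, hb]) f hf⟩
end
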